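/- If (RG)^- is anticommutative and * ≠ Id on G, then there exists s ∈ Z(G) ∩ G_* with s² = 1 such that x^* ∈ {x, sx} for all x ∈ G. -/

import Mathlib

open Finsupp

/-- The generalized oriented map σ* on the group ring RG. -/
noncomputable def sigmaStar {R : Type} [CommRing R] {G : Type} [Group G]
    (inv : G → G) (σ : G →* Rˣ) (α : MonoidAlgebra R G) : MonoidAlgebra R G :=
  MonoidAlgebra.ofCoeff (α.coeff.sum fun x a => Finsupp.single (inv x) ((σ x : R) * a))

/-- The set of skew-symmetric elements of RG under σ*. -/
def skewSet {R : Type} [CommRing R] {G : Type} [Group G]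
    (inv : G → G) (σ : G →* Rˣ) : Set (MonoidAlgebra R G) :=
  {α | sigmaStar inv σ α = -α}


/-!
For `x` with `x* ≠ x` the element `α_x = x - σ(x) x*` is skew, and comparing coefficients in
`α_x² + α_x² = 0` shows that `x` commutes with `x*` and `(x*)² = x²`; hence `s_x = x* x⁻¹` is an
involution commuting with `x`. If `s_x ≠ s_y` for two such elements, the coefficient of `xy` in
`α_x α_y + α_y α_x` leaves three possibilities: `y* x = xy` with `σ(y) = 1`, `y x* = xy`, or
`y* x* = xy` with `σ(x) σ(y) = -1`. The first is refuted by the coefficient of `x* xy` in the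
anticommutator of `α_x` and `α_{xy}`, the last by the anticommutator of `α_x` with the skew element
`xy` itself. So `y x* = xy`, symmetrically `x y* = yx`, and applying `*` gives `y* x* = yx`, which
forces `s_x = s_y` after all. Thus `s = s_x` does not depend on `x`; conjugating a non-symmetric
element by a symmetric one shows that `s` is central.
-/

section GroupFacts

variable {G : Type*} [Group G] {x a y b : G}

lemma Commute.mul_inv_mul_self_eq_one (hxa : Commute x a) (hsq : a * a = x * x) :
    a * x⁻¹ * (a * x⁻¹) = 1 := by
  calc a * x⁻¹ * (a * x⁻¹) = a * (x⁻¹ * a) * x⁻¹ := by group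
    _ = a * a * (x⁻¹ * x⁻¹) := by rw [hxa.inv_left.eq]; group
    _ = 1 := by rw [hsq]; group

lemma Commute.mul_inv_eq_of_mul_eq_mul (hyb : Commute y b) (e : b * x = y * a) :
    a * x⁻¹ = b * y⁻¹ := by
  rw [← hyb.inv_left.eq, eq_inv_mul_iff_mul_eq, ← mul_assoc, ← e, mul_inv_cancel_right]

lemma Commute.mul_inv_eq_of_mul_eq_mul_of_mul_self_eq (hxa : Commute x a) (hsq : a * a = x * x)
    (hyb : Commute y b) (e : b * a = y * x) : a * x⁻¹ = b * y⁻¹ := by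
  rw [← inv_eq_of_mul_eq_one_right (hxa.mul_inv_mul_self_eq_one hsq), ← hyb.inv_left.eq,
    eq_inv_mul_iff_mul_eq, mul_inv_rev, inv_inv, ← mul_assoc, ← e, mul_inv_cancel_right]

end GroupFacts

section OrientedGroupRing

variable {R G : Type} [CommRing R] [Group G] {inv : G → G} {σ : G →* Rˣ}

/-- The element `s` with `x* = s x`. -/
def twist (inv : G → G) (x : G) : G :=
  inv x * x⁻¹

lemma twist_mul (x : G) : twist inv x * x = inv x :=
  inv_mul_cancel_right _ _

variable (inv σ) in
noncomputable def skewElement (g : G) : MonoidAlgebra R G :=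
  MonoidAlgebra.single g 1 - MonoidAlgebra.single (inv g) (σ g : R)

variable (inv σ) in
lemma sigmaStar_single (g : G) (c : R) :
    sigmaStar inv σ (MonoidAlgebra.single g c) = MonoidAlgebra.single (inv g) (σ g * c) := by
  rw [sigmaStar, MonoidAlgebra.coeff_single, Finsupp.sum_single_index (by simp)]
  rfl

variable (inv σ) in
lemma sigmaStar_sub (α β : MonoidAlgebra R G) :
    sigmaStar inv σ (α - β) = sigmaStar inv σ α - sigmaStar inv σ β := by
  rw [sigmaStar, MonoidAlgebra.coeff_sub,
    Finsupp.sum_sub_index fun _ _ _ => by rw [mul_sub, Finsupp.single_sub]]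
  rfl

lemma val_sigma_inv_mul (hker : ∀ x, x * inv x ∈ σ.ker) (g : G) :
    (σ (inv g) : R) * σ g = 1 := by
  rw [← Units.val_mul, mul_comm, ← map_mul, MonoidHom.mem_ker.mp (hker g), Units.val_one]

lemma skewElement_mem_skewSet (hinv : ∀ x, inv (inv x) = x) (hker : ∀ x, x * inv x ∈ σ.ker)
    (g : G) : skewElement inv σ g ∈ skewSet inv σ := by
  rw [skewSet, Set.mem_ofPred_eq, skewElement, sigmaStar_sub, sigmaStar_single, sigmaStar_single,
    hinv, mul_one, val_sigma_inv_mul hker, neg_sub]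

lemma single_one_mem_skewSet {g : G} (hg : inv g = g) (hσ : (σ g : R) = -1) :
    MonoidAlgebra.single g (1 : R) ∈ skewSet inv σ := by
  rw [skewSet, Set.mem_ofPred_eq, sigmaStar_single, hg, hσ, neg_one_mul, MonoidAlgebra.single_neg]

open Classical in
variable (inv σ) in
lemma coeff_skewElement_anticomm (x y p : G) :
    (skewElement inv σ x * skewElement inv σ y + skewElement inv σ y * skewElement inv σ x).coeff p
      = (if x * y = p then 1 else 0) + (if y * x = p then 1 else 0)
        - (if x * inv y = p then (σ y : R) else 0) - (if inv y * x = p then (σ y : R) else 0)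
        - (if inv x * y = p then (σ x : R) else 0) - (if y * inv x = p then (σ x : R) else 0)
        + (if inv x * inv y = p then (σ x * σ y : R) else 0)
        + (if inv y * inv x = p then (σ y * σ x : R) else 0) := by
  simp only [skewElement, sub_mul, mul_sub, MonoidAlgebra.single_mul_single, one_mul, mul_one,
    MonoidAlgebra.coeff_add, MonoidAlgebra.coeff_sub, MonoidAlgebra.coeff_single,
    Finsupp.add_apply, Finsupp.sub_apply, Finsupp.single_apply]
  ring

open Classical in
variable (inv σ) in
lemma coeff_skewElement_anticomm_single (x g p : G) :
    (skewElement inv σ x * MonoidAlgebra.single g 1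
        + MonoidAlgebra.single g 1 * skewElement inv σ x).coeff p
      = (if x * g = p then 1 else 0) + (if g * x = p then 1 else 0)
        - (if inv x * g = p then (σ x : R) else 0) - (if g * inv x = p then (σ x : R) else 0) := by
  simp only [skewElement, sub_mul, mul_sub, MonoidAlgebra.single_mul_single, one_mul, mul_one,
    MonoidAlgebra.coeff_add, MonoidAlgebra.coeff_sub, MonoidAlgebra.coeff_single,
    Finsupp.add_apply, Finsupp.sub_apply, Finsupp.single_apply]
  ring

structure IsSkewAnticomm (inv : G → G) (σ : G →* Rˣ) : Prop where
  inv_mul_rev : ∀ x y, inv (x * y) = inv y * inv x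
  inv_inv : ∀ x, inv (inv x) = x
  mul_inv_mem_ker : ∀ x, x * inv x ∈ σ.ker
  anticomm : ∀ α ∈ skewSet inv σ, ∀ β ∈ skewSet inv σ, α * β + β * α = 0

namespace IsSkewAnticomm

lemma coeff_skewElement_anticomm_eq_zero (h : IsSkewAnticomm inv σ) (x y p : G) :
    (skewElement inv σ x * skewElement inv σ y
      + skewElement inv σ y * skewElement inv σ x).coeff p = 0 := by
  rw [h.anticomm _ (skewElement_mem_skewSet h.inv_inv h.mul_inv_mem_ker x) _
    (skewElement_mem_skewSet h.inv_inv h.mul_inv_mem_ker y)]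
  rfl

lemma coeff_skewElement_anticomm_single_eq_zero (h : IsSkewAnticomm inv σ) {g : G}
    (hg : inv g = g) (hσg : (σ g : R) = -1) (x p : G) :
    (skewElement inv σ x * MonoidAlgebra.single g 1
      + MonoidAlgebra.single g 1 * skewElement inv σ x).coeff p = 0 := by
  rw [h.anticomm _ (skewElement_mem_skewSet h.inv_inv h.mul_inv_mem_ker x) _
    (single_one_mem_skewSet hg hσg)]
  rfl

lemma commute_self_inv (h : IsSkewAnticomm inv σ) (h2 : (2 : R) ≠ 0) {x : G} (hx : inv x ≠ x) :
    Commute x (inv x) := by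
  by_contra hc
  have n1 : x * x ≠ x * inv x := fun e => hx (mul_left_cancel e).symm
  have n2 : inv x * inv x ≠ x * inv x := fun e => hx (mul_right_cancel e)
  have E := h.coeff_skewElement_anticomm_eq_zero x x (x * inv x)
  simp only [coeff_skewElement_anticomm, n1, n2, Ne.symm hc, ↓reduceIte] at E
  exact h2 ((Units.mul_left_eq_zero (σ x)).mp (by linear_combination -E))

lemma inv_mul_inv_eq_mul_self (h : IsSkewAnticomm inv σ) (h2 : (2 : R) ≠ 0) {x : G}
    (hx : inv x ≠ x) : inv x * inv x = x * x := by
  by_contra hc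
  have n1 : x * inv x ≠ x * x := fun e => hx (mul_left_cancel e)
  have n2 : inv x * x ≠ x * x := fun e => hx (mul_right_cancel e)
  have E := h.coeff_skewElement_anticomm_eq_zero x x (x * x)
  simp only [coeff_skewElement_anticomm, n1, n2, hc, ↓reduceIte] at E
  exact h2 (by linear_combination E)

lemma val_sigma_eq_one (h : IsSkewAnticomm inv σ) (h2 : (2 : R) ≠ 0) {x g : G} (hx : inv x ≠ x)
    (hg : inv g = g) (hσg : (σ g : R) = -1) : (σ x : R) = 1 := by
  have E := h.coeff_skewElement_anticomm_single_eq_zero hg hσg x (x * g)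
  rw [coeff_skewElement_anticomm_single] at E
  have n1 : inv x * g ≠ x * g := fun e => hx (mul_right_cancel e)
  by_cases hgx : g * x = x * g
  · have n2 : g * inv x ≠ x * g := fun e => hx (mul_left_cancel (e.trans hgx.symm))
    simp only [hgx, n1, n2, ↓reduceIte] at E
    exact absurd (by linear_combination E) h2
  by_cases hgx' : g * inv x = x * g
  · simp only [hgx, hgx', n1, ↓reduceIte] at E
    linear_combination -E
  · simp only [hgx, hgx', n1, ↓reduceIte] at E
    exact absurd (by linear_combination 2 * E) h2

lemma map_inv (h : IsSkewAnticomm inv σ) (x : G) : inv x⁻¹ = (inv x)⁻¹ := by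
  have h1 : inv 1 = 1 := by simpa using h.inv_mul_rev 1 1
  refine eq_inv_of_mul_eq_one_right ?_
  rw [← h.inv_mul_rev, inv_mul_cancel, h1]

lemma twist_eq_of_inv_mul_inv_eq (h : IsSkewAnticomm inv σ) (h2 : (2 : R) ≠ 0) {x y : G}
    (hx : inv x ≠ x) (hy : inv y ≠ y) (e : inv y * inv x = y * x) :
    twist inv x = twist inv y :=
  (h.commute_self_inv h2 hx).mul_inv_eq_of_mul_eq_mul_of_mul_self_eq
    (h.inv_mul_inv_eq_mul_self h2 hx) (h.commute_self_inv h2 hy) e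

lemma twist_mul_self (h : IsSkewAnticomm inv σ) (h2 : (2 : R) ≠ 0) {x : G} (hx : inv x ≠ x) :
    twist inv x * twist inv x = 1 :=
  (h.commute_self_inv h2 hx).mul_inv_mul_self_eq_one (h.inv_mul_inv_eq_mul_self h2 hx)

lemma val_sigma_add_eq_zero (h : IsSkewAnticomm inv σ) {x z s : G} (hxs : inv x = x * s)
    (hzs : inv z = z * s) (hs : s ≠ 1) (hss : s * s = 1) (hsx : Commute s x) (hsz : Commute s z)
    (hzx : z * x ≠ x * z) (hzx' : z * x ≠ x * z * s) : (σ x : R) + σ z = 0 := by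
  have e1 : x * (z * s) = x * z * s := (mul_assoc _ _ _).symm
  have e2 : x * s * z = x * z * s := by rw [mul_assoc, hsz.eq, ← mul_assoc]
  have n1 : x * z ≠ x * z * s := fun e => hs (left_eq_mul.mp e)
  have n2 : z * s * x ≠ x * z * s := fun e =>
    hzx (mul_right_cancel (by rwa [mul_assoc, hsx.eq, ← mul_assoc] at e))
  have n3 : z * (x * s) ≠ x * z * s := fun e => hzx (mul_right_cancel (by rwa [← mul_assoc] at e))
  have n4 : x * s * (z * s) ≠ x * z * s := fun e =>
    n1 (by rwa [← mul_assoc, e2, mul_assoc, hss, mul_one] at e)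
  have n5 : z * s * (x * s) ≠ x * z * s := fun e =>
    hzx' (by rwa [mul_assoc, ← mul_assoc s, hsx.eq, mul_assoc, hss, mul_one] at e)
  -- `x z s = x* z = x z*`, and no other term of `α_x α_z + α_z α_x` lands there.
  have E := h.coeff_skewElement_anticomm_eq_zero x z (x * z * s)
  simp only [coeff_skewElement_anticomm, hxs, hzs, e1, e2, n1, hzx', n2, n3, n4, n5,
    ↓reduceIte] at E
  linear_combination -E

lemma val_sigma_ne_one (h : IsSkewAnticomm inv σ) (h2 : (2 : R) ≠ 0) {x y : G} (hx : inv x ≠ x)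
    (hy : inv y ≠ y) (hst : twist inv x ≠ twist inv y) (e : inv y * x = x * y) :
    (σ y : R) ≠ 1 := by
  intro hσy
  set s := twist inv x
  have hsx : Commute s x := (h.commute_self_inv h2 hx).symm.mul_left (Commute.refl x).inv_left
  have hxs : inv x = x * s := by rw [← hsx.eq, twist_mul]
  have hs : s ≠ 1 := fun e => hx (by rw [hxs, e, mul_one])
  have hss : s * s = 1 := h.twist_mul_self h2 hx
  have hy' : inv y = x * y * x⁻¹ := eq_mul_inv_of_mul_eq e
  have hzs : inv (x * y) = x * y * s := by rw [h.inv_mul_rev, hy', hxs]; group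
  have hz : inv (x * y) ≠ x * y := by rw [hzs]; exact fun e => hs (mul_eq_left.mp e)
  have hsz : Commute s (x * y) := by
    have hcz := h.commute_self_inv h2 hz
    rw [hzs] at hcz
    have := ((Commute.refl (x * y)).inv_right.mul_right hcz).symm
    rwa [inv_mul_cancel_left] at this
  have hzx : x * y * x ≠ x * (x * y) := fun e' => by
    have hyx : y * x = x * y := mul_left_cancel (a := x) (by rw [← mul_assoc]; exact e')
    exact hy (by rw [hy', ← hyx, mul_inv_cancel_right])
  have hzx' : x * y * x ≠ x * (x * y) * s := fun e' => by
    have hyx : y * x = x * y * s := mul_left_cancel (a := x) (by simpa only [mul_assoc] using e')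
    apply hst
    calc s = s⁻¹ := (inv_eq_of_mul_eq_one_right hss).symm
      _ = (x * y * s * (x * y)⁻¹)⁻¹ := by rw [← hsz.eq, mul_inv_cancel_right]
      _ = (y * x * (x * y)⁻¹)⁻¹ := by rw [hyx]
      _ = twist inv y := by rw [twist, hy']; group
  have hσ := h.val_sigma_add_eq_zero hxs hzs hs hss hsx hsz hzx hzx'
  rw [map_mul, Units.val_mul, hσy, mul_one] at hσ
  exact h2 ((Units.mul_left_eq_zero (σ x)).mp (by linear_combination hσ))

lemma val_sigma_mul_ne_neg_one (h : IsSkewAnticomm inv σ) (h2 : (2 : R) ≠ 0) {x y : G}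
    (hx : inv x ≠ x) (hy : inv y ≠ y) (e : inv y * inv x = x * y) : (σ x : R) * σ y ≠ -1 := by
  intro hσ
  have hsym : inv (x * y) = x * y := by rw [h.inv_mul_rev, e]
  have hσxy : (σ (x * y) : R) = -1 := by rw [map_mul, Units.val_mul, hσ]
  rw [h.val_sigma_eq_one h2 hx hsym hσxy, h.val_sigma_eq_one h2 hy hsym hσxy] at hσ
  exact h2 (by linear_combination hσ)

lemma mul_inv_eq_of_twist_ne (h : IsSkewAnticomm inv σ) (h2 : (2 : R) ≠ 0) {x y : G}
    (hx : inv x ≠ x) (hy : inv y ≠ y) (hst : twist inv x ≠ twist inv y) :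
    y * inv x = x * y := by
  have E := h.coeff_skewElement_anticomm_eq_zero x y (x * y)
  have n1 : x * inv y ≠ x * y := fun e => hy (mul_left_cancel e)
  have n2 : inv x * y ≠ x * y := fun e => hx (mul_right_cancel e)
  have n3 : inv x * inv y ≠ x * y := fun e =>
    hst (h.twist_eq_of_inv_mul_inv_eq h2 hy hx e).symm
  simp only [coeff_skewElement_anticomm, n1, n2, n3, ↓reduceIte] at E
  by_cases hyx : y * x = x * y
  · have n4 : inv y * x ≠ x * y := fun e => hy (mul_right_cancel (e.trans hyx.symm))
    have n5 : y * inv x ≠ x * y := fun e => hx (mul_left_cancel (e.trans hyx.symm))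
    have n6 : inv y * inv x ≠ x * y := fun e =>
      hst (h.twist_eq_of_inv_mul_inv_eq h2 hx hy (e.trans hyx.symm))
    simp only [hyx, n4, n5, n6, ↓reduceIte] at E
    exact absurd (by linear_combination E) h2
  by_cases hyix : inv y * x = x * y
  · have n5 : y * inv x ≠ x * y := fun e =>
      hst ((h.commute_self_inv h2 hy).mul_inv_eq_of_mul_eq_mul (hyix.trans e.symm))
    have n6 : inv y * inv x ≠ x * y := fun e => hx (mul_left_cancel (e.trans hyix.symm))
    simp only [hyx, hyix, n5, n6, ↓reduceIte] at E
    exact absurd (by linear_combination -E) (h.val_sigma_ne_one h2 hx hy hst hyix)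
  by_contra hyxi
  by_cases hyixi : inv y * inv x = x * y
  · simp only [hyx, hyix, hyxi, hyixi, ↓reduceIte] at E
    exact h.val_sigma_mul_ne_neg_one h2 hx hy hyixi (by linear_combination E)
  · simp only [hyx, hyix, hyxi, hyixi, ↓reduceIte] at E
    exact h2 (by linear_combination 2 * E)

lemma twist_eq (h : IsSkewAnticomm inv σ) (h2 : (2 : R) ≠ 0) {x y : G} (hx : inv x ≠ x)
    (hy : inv y ≠ y) : twist inv x = twist inv y := by
  by_contra hst
  have hxy := h.mul_inv_eq_of_twist_ne h2 hx hy hst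
  have hyx := h.mul_inv_eq_of_twist_ne h2 hy hx (Ne.symm hst)
  refine hst (h.twist_eq_of_inv_mul_inv_eq h2 hx hy ?_)
  rw [← h.inv_mul_rev, ← hxy, h.inv_mul_rev, h.inv_inv, hyx]

lemma twist_mem_center (h : IsSkewAnticomm inv σ) (h2 : (2 : R) ≠ 0) {x : G} (hx : inv x ≠ x) :
    twist inv x ∈ Subgroup.center G := by
  rw [Subgroup.mem_center_iff]
  intro g
  by_cases hg : inv g = g
  · have hgxg : inv (g * x * g) = g * inv x * g := by
      rw [h.inv_mul_rev, h.inv_mul_rev, hg, mul_assoc]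
    have hz : inv (g * x * g) ≠ g * x * g := by
      rw [hgxg]; exact fun e => hx (mul_left_cancel (mul_right_cancel e))
    have e := h.twist_eq h2 hz hx
    simp only [twist, hgxg] at e ⊢
    calc g * (inv x * x⁻¹) = g * inv x * g * (g * x * g)⁻¹ * g := by group
      _ = inv x * x⁻¹ * g := by rw [e]
  · rw [← h.twist_eq h2 hg hx, twist, ← mul_assoc, (h.commute_self_inv h2 hg).eq,
      mul_inv_cancel_right, inv_mul_cancel_right]

lemma inv_twist (h : IsSkewAnticomm inv σ) (h2 : (2 : R) ≠ 0) {x : G} (hx : inv x ≠ x) :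
    inv (twist inv x) = twist inv x := by
  rw [twist, h.inv_mul_rev, h.map_inv, h.inv_inv]
  calc (inv x)⁻¹ * x = (inv x * x⁻¹)⁻¹ := by rw [← (h.commute_self_inv h2 hx).inv_left.eq]; group
    _ = inv x * x⁻¹ := inv_eq_of_mul_eq_one_right (h.twist_mul_self h2 hx)

end IsSkewAnticomm

end OrientedGroupRing

theorem stmt15 {R : Type} [CommRing R] (hchar : ringChar R ≠ 2) {G : Type} [Group G]
    (inv : G → G) (hmul : ∀ x y : G, inv (x * y) = inv y * inv x)
    (hinv : ∀ x : G, inv (inv x) = x) (hne : inv ≠ id) (σ : G →* Rˣ) (hnt : σ ≠ 1)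
    (hcompat : ∀ x : G, x * inv x ∈ σ.ker)
    (hanti : ∀ α ∈ skewSet inv σ, ∀ β ∈ skewSet inv σ, α * β + β * α = 0) :
    ∃ s : G, s ∈ Subgroup.center G ∧ inv s = s ∧ s ^ 2 = 1 ∧
      ∀ x : G, inv x = x ∨ inv x = s * x := by
  have h : IsSkewAnticomm inv σ := ⟨hmul, hinv, hcompat, hanti⟩
  obtain ⟨g, hg⟩ := DFunLike.ne_iff.mp hnt
  have : Nontrivial R := nontrivial_of_ne _ _ (mt Units.val_eq_one.mp hg)
  have h2 : (2 : R) ≠ 0 := Ring.two_ne_zero hchar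
  obtain ⟨x₀, hx₀⟩ : ∃ x, inv x ≠ x := Function.ne_iff.mp hne
  refine ⟨twist inv x₀, h.twist_mem_center h2 hx₀, h.inv_twist h2 hx₀,
    (sq _).trans (h.twist_mul_self h2 hx₀), fun x => ?_⟩
  by_cases hx : inv x = x
  exacts [Or.inl hx, Or.inr (by rw [← h.twist_eq h2 hx hx₀, twist_mul])]
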